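/- In the neural setup with n ≥ 1, assume E[X_j⁴] < ∞ for every j ∈ {1, …, d}. For k ∈ {1,2,3,4}, let j^k = (j^k_0, j^k_1, …, j^k_n) be sequences with entries in {1, …, d}, and set P = (∏_{i=1}^n Θ^{(i)}_{j^1_{i−1} j^1_i}) X_{j^1_n} · (∏_{i=1}^n Θ^{(i)}_{j^2_{i−1} j^2_i}) X_{j^2_n} and Q = (∏_{i=1}^n Θ^{(i)}_{j^3_{i−1} j^3_i}) X_{j^3_n} · (∏_{i=1}^n Θ^{(i)}_{j^4_{i−1} j^4_i}) X_{j^4_n}. If the tuple (j¹, j², j³, j⁴) is not bad, then Cov(P, Q) = 0. -/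

import Mathlib

/-!
Split each path product into its `Θ`-part and its `X`-part; these are independent, so every
expectation factors. The `Θ`-part of a product of paths is a monomial `∏ Θ_e ^ m(e)` in the
independent entries, where `m(e)` counts how often the paths traverse the edge `e`, so its
expectation is the product of the Gaussian moments `E[Θ_e ^ m(e)]`, and one odd `m(e)` kills it
by symmetry of the centred Gaussian. If the four paths are not bad, some step admits no pairing;
since four objects whose classes all have even size can always be paired off, some edge at that
step is traversed an odd number of times, and `E[PQ] = 0`. Likewise, if `E[P]` and `E[Q]` were
both nonzero, the paths `j¹, j²` and `j³, j⁴` would coincide edge by edge, a pairing at every step.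
-/

open MeasureTheory ProbabilityTheory
open scoped NNReal

noncomputable section

variable {Ω : Type*} [MeasurableSpace Ω]

/-- The product `(∏_{i=1}^n Θ^{(i)}_{a_{i−1} a_i}) X_{a_n} · (∏_{i=1}^n Θ^{(i)}_{b_{i−1} b_i}) X_{b_n}`
along two paths `a` and `b`. -/
def pathProd (d n : ℕ) (Θ : Fin n → Ω → Matrix (Fin d) (Fin d) ℝ)
    (X : Fin d → Ω → ℝ) (a b : Fin (n + 1) → Fin d) (ω : Ω) : ℝ :=
  ((∏ i : Fin n, Θ i ω (a i.castSucc) (a i.succ)) * X (a (Fin.last n)) ω) *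
    ((∏ i : Fin n, Θ i ω (b i.castSucc) (b i.succ)) * X (b (Fin.last n)) ω)

/-- At one step, the four pairs of consecutive values can be split into two disjoint pairs
that agree both at time `i` and at time `i+1`. -/
def StepOK {d : ℕ} (u v : Fin 4 → Fin d) : Prop :=
  ∃ p q r s : Fin 4, ({p, q, r, s} : Finset (Fin 4)) = Finset.univ ∧
    u p = u q ∧ v p = v q ∧ u r = u s ∧ v r = v s

/-- A tuple of four sequences `j k : Fin (n+1) → Fin d` is bad if the pairing condition
holds at every step `i ∈ {0, …, n−1}`. -/
def IsBad (d n : ℕ) (j : Fin 4 → Fin (n + 1) → Fin d) : Prop :=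
  ∀ i : Fin n, StepOK (fun k => j k i.castSucc) (fun k => j k i.succ)

open Finset

theorem integral_pow_eq_zero_of_odd (ν : Measure ℝ) [ν.IsNegInvariant] {m : ℕ} (hm : Odd m) :
    ∫ x, x ^ m ∂ν = 0 := by
  have h := integral_neg_eq_self (fun x : ℝ => x ^ m) ν
  simp only [hm.neg_pow, integral_neg] at h
  linarith

instance (v : ℝ≥0) : (gaussianReal 0 v).IsNegInvariant :=
  ⟨(gaussianReal_map_neg (μ := 0) (v := v)).trans (by rw [neg_zero])⟩

theorem ProbabilityTheory.iIndepFun.integral_prod_eq_zero_of_odd_card_fiber {ι κ : Type*}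
    [Fintype ι] [DecidableEq ι] {μ : Measure Ω} {Y : ι → Ω → ℝ} (hind : iIndepFun Y μ)
    (hY : ∀ i, AEMeasurable (Y i) μ) {p : ι} [(μ.map (Y p)).IsNegInvariant]
    (s : Finset κ) (e : κ → ι) (hodd : Odd #{x ∈ s | e x = p}) :
    ∫ ω, ∏ x ∈ s, Y (e x) ω ∂μ = 0 := by
  have hpow (ω : Ω) : ∏ x ∈ s, Y (e x) ω = ∏ i, Y i ω ^ #{x ∈ s | e x = i} := by
    simp_rw [← prod_const, prod_fiberwise']
  simp_rw [hpow]
  rw [hind.integral_fun_prod_comp hY fun i => (continuous_pow _).aestronglyMeasurable]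
  refine prod_eq_zero (mem_univ p) ?_
  rw [← integral_map (hY p) (continuous_pow _).aestronglyMeasurable]
  exact integral_pow_eq_zero_of_odd _ hodd

theorem exists_pairing_of_even_card_fiber {α : Type*} [DecidableEq α] (w : Fin 4 → α)
    (h : ∀ k₀, Even #{k | w k = w k₀}) :
    ∃ p q r s : Fin 4, ({p, q, r, s} : Finset (Fin 4)) = univ ∧ w p = w q ∧ w r = w s := by
  by_cases hall : ∀ k, w k = w 0
  · exact ⟨0, 1, 2, 3, by decide, (hall 1).symm, (hall 2).trans (hall 3).symm⟩
  obtain ⟨k₁, hk₁⟩ := not_forall.1 hall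
  let F (k₀ : Fin 4) : Finset (Fin 4) := {k | w k = w k₀}
  have two_le (k₀ : Fin 4) : 2 ≤ #(F k₀) := by
    have hpos : 0 < #(F k₀) := card_pos.2 ⟨k₀, by simp [F]⟩
    obtain ⟨m, hm⟩ : Even #(F k₀) := h k₀
    omega
  have h₀ := two_le 0
  have h₁ := two_le k₁
  have hsum : #(F 0 ∪ F k₁) = #(F 0) + #(F k₁) :=
    card_union_of_disjoint <| disjoint_filter.2 fun k _ h0 h1 => hk₁ (h1.symm.trans h0)
  have hle : #(F 0 ∪ F k₁) ≤ 4 := card_le_univ _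
  have hunion : F 0 ∪ F k₁ = univ := eq_univ_of_card _ (by rw [Fintype.card_fin]; omega)
  obtain ⟨p, q, -, hpq⟩ := card_eq_two.1 (show #(F 0) = 2 by omega)
  obtain ⟨r, s, -, hrs⟩ := card_eq_two.1 (show #(F k₁) = 2 by omega)
  have same {k₀ a b : Fin 4} (ha : a ∈ F k₀) (hb : b ∈ F k₀) : w a = w b := by
    simp only [F, mem_filter] at ha hb
    exact ha.2.trans hb.2.symm
  refine ⟨p, q, r, s, ?_, same (k₀ := 0) ?_ ?_, same (k₀ := k₁) ?_ ?_⟩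
  · rw [← hunion, hpq, hrs, insert_union, singleton_union]
  all_goals simp [hpq, hrs]

theorem stepOK_of_even_card_fiber {d : ℕ} (u v : Fin 4 → Fin d)
    (h : ∀ k₀, Even #{k | (u k, v k) = (u k₀, v k₀)}) : StepOK u v := by
  obtain ⟨p, q, r, s, huniv, hpq, hrs⟩ := exists_pairing_of_even_card_fiber _ h
  simp only [Prod.ext_iff] at hpq hrs
  exact ⟨p, q, r, s, huniv, hpq.1, hpq.2, hrs.1, hrs.2⟩

def pathWeight {d n : ℕ} (Θ : Fin n → Ω → Matrix (Fin d) (Fin d) ℝ) (X : Fin d → Ω → ℝ)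
    (a : Fin (n + 1) → Fin d) (ω : Ω) : ℝ :=
  (∏ i : Fin n, Θ i ω (a i.castSucc) (a i.succ)) * X (a (Fin.last n)) ω

theorem integral_prod_pathWeight_eq_zero {d n : ℕ} {κ : Type*} [Fintype κ] {μ : Measure Ω}
    {Θ : Fin n → Ω → Matrix (Fin d) (Fin d) ℝ} {X : Fin d → Ω → ℝ}
    (hΘmeas : ∀ i a b, Measurable fun ω => Θ i ω a b) (hXmeas : ∀ j, Measurable (X j))
    (hentries : iIndepFun
      (fun p : Fin n × Fin d × Fin d => fun ω => Θ p.1 ω p.2.1 p.2.2) μ)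
    (hsymm : ∀ i a b, (μ.map fun ω => Θ i ω a b).IsNegInvariant)
    (hindepX : IndepFun (fun ω => fun p : Fin n × Fin d × Fin d => Θ p.1 ω p.2.1 p.2.2)
      (fun ω (j : Fin d) => X j ω) μ)
    (j : κ → Fin (n + 1) → Fin d) (i : Fin n) (e : Fin d × Fin d)
    (hodd : Odd #{k | (j k i.castSucc, j k i.succ) = e}) :
    ∫ ω, ∏ k, pathWeight Θ X (j k) ω ∂μ = 0 := by
  let edge (x : κ × Fin n) : Fin n × Fin d × Fin d := (x.2, j x.1 x.2.castSucc, j x.1 x.2.succ)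
  have hsplit (ω : Ω) : ∏ k, pathWeight Θ X (j k) ω =
      (∏ x, Θ (edge x).1 ω (edge x).2.1 (edge x).2.2) * ∏ k, X (j k (Fin.last n)) ω := by
    simp only [pathWeight, prod_mul_distrib, Fintype.prod_prod_type, edge]
  have hfiber : #{x | edge x = (i, e)} = #{k | (j k i.castSucc, j k i.succ) = e} := by
    rw [← mul_one #{k | (j k i.castSucc, j k i.succ) = e}, ← card_singleton i, ← card_product]
    congr 1
    ext ⟨k, i'⟩
    simp only [edge, mem_filter, mem_univ, true_and, mem_product, mem_singleton, Prod.ext_iff]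
    aesop
  have := hsymm i e.1 e.2
  simp_rw [hsplit]
  rw [hindepX.integral_fun_comp_mul_comp (f := fun t => ∏ x, t (edge x))
      (g := fun x => ∏ k, x (j k (Fin.last n)))
      (measurable_pi_lambda _ fun p => hΘmeas _ _ _).aemeasurable
      (measurable_pi_lambda _ hXmeas).aemeasurable
      (by fun_prop : Continuous _).aestronglyMeasurable
      (by fun_prop : Continuous _).aestronglyMeasurable,
    hentries.integral_prod_eq_zero_of_odd_card_fiber (fun p => (hΘmeas _ _ _).aemeasurable)
      (p := (i, e)) univ edge (hfiber ▸ hodd), zero_mul]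

theorem integral_pathProd_eq_zero {d n : ℕ} {μ : Measure Ω}
    {Θ : Fin n → Ω → Matrix (Fin d) (Fin d) ℝ} {X : Fin d → Ω → ℝ}
    (hΘmeas : ∀ i a b, Measurable fun ω => Θ i ω a b) (hXmeas : ∀ j, Measurable (X j))
    (hentries : iIndepFun
      (fun p : Fin n × Fin d × Fin d => fun ω => Θ p.1 ω p.2.1 p.2.2) μ)
    (hsymm : ∀ i a b, (μ.map fun ω => Θ i ω a b).IsNegInvariant)
    (hindepX : IndepFun (fun ω => fun p : Fin n × Fin d × Fin d => Θ p.1 ω p.2.1 p.2.2)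
      (fun ω (j : Fin d) => X j ω) μ)
    {a b : Fin (n + 1) → Fin d} (i : Fin n)
    (hab : (a i.castSucc, a i.succ) ≠ (b i.castSucc, b i.succ)) :
    ∫ ω, pathProd d n Θ X a b ω ∂μ = 0 := by
  have hodd :
      Odd #{k | (![a, b] k i.castSucc, ![a, b] k i.succ) = (a i.castSucc, a i.succ)} := by
    rw [card_eq_one.2 ⟨0, ?_⟩]
    · exact odd_one
    ext k
    fin_cases k
    · simp
    · simpa [Prod.ext_iff, eq_comm] using hab
  simpa [pathProd, pathWeight] using
    integral_prod_pathWeight_eq_zero hΘmeas hXmeas hentries hsymm hindepX ![a, b] i _ hodd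

theorem cov_pathProd_eq_zero_of_not_bad_general (μ : Measure Ω)
    (d n : ℕ)
    (Θ : Fin n → Ω → Matrix (Fin d) (Fin d) ℝ) (X : Fin d → Ω → ℝ)
    (hΘmeas : ∀ i a b, Measurable fun ω => Θ i ω a b)
    (hXmeas : ∀ j, Measurable (X j))
    (hentries : iIndepFun
      (fun p : Fin n × Fin d × Fin d => fun ω => Θ p.1 ω p.2.1 p.2.2) μ)
    (hgauss : ∀ i a b, Measure.map (fun ω => Θ i ω a b) μ = gaussianReal 0 (d : ℝ≥0)⁻¹)
    (hindepX : IndepFun (fun ω => fun p : Fin n × Fin d × Fin d => Θ p.1 ω p.2.1 p.2.2)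
      (fun ω (j : Fin d) => X j ω) μ)
    (j : Fin 4 → Fin (n + 1) → Fin d)
    (hnotbad : ¬ IsBad d n j) :
    (∫ ω, pathProd d n Θ X (j 0) (j 1) ω * pathProd d n Θ X (j 2) (j 3) ω ∂μ)
        - (∫ ω, pathProd d n Θ X (j 0) (j 1) ω ∂μ)
          * (∫ ω, pathProd d n Θ X (j 2) (j 3) ω ∂μ) = 0 := by
  have hsymm : ∀ i a b, (μ.map fun ω => Θ i ω a b).IsNegInvariant := fun i a b => by
    rw [hgauss]; infer_instance
  have hpair (a b : Fin 4) (hP : ∫ ω, pathProd d n Θ X (j a) (j b) ω ∂μ ≠ 0) (i : Fin n) :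
      j a i.castSucc = j b i.castSucc ∧ j a i.succ = j b i.succ := by
    by_contra hne
    exact hP (integral_pathProd_eq_zero hΘmeas hXmeas hentries hsymm hindepX i
      (by simpa [Prod.ext_iff] using hne))
  obtain ⟨i, hi⟩ := not_forall.1 hnotbad
  obtain ⟨k₀, hk₀⟩ : ∃ k₀, ¬ Even #{k | (j k i.castSucc, j k i.succ) =
      (j k₀ i.castSucc, j k₀ i.succ)} :=
    not_forall.1 fun h => hi (stepOK_of_even_card_fiber _ _ h)
  have hPQ : ∫ ω, pathProd d n Θ X (j 0) (j 1) ω * pathProd d n Θ X (j 2) (j 3) ω ∂μ = 0 := by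
    simpa [pathProd, pathWeight, Fin.prod_univ_four, mul_assoc] using
      integral_prod_pathWeight_eq_zero hΘmeas hXmeas hentries hsymm hindepX j i _
        (Nat.not_even_iff_odd.1 hk₀)
  have hPmulQ : (∫ ω, pathProd d n Θ X (j 0) (j 1) ω ∂μ)
      * (∫ ω, pathProd d n Θ X (j 2) (j 3) ω ∂μ) = 0 := by
    by_contra h
    obtain ⟨hP, hQ⟩ := mul_ne_zero_iff.1 h
    exact hnotbad fun i => ⟨0, 1, 2, 3, by decide, (hpair 0 1 hP i).1, (hpair 0 1 hP i).2,
      (hpair 2 3 hQ i).1, (hpair 2 3 hQ i).2⟩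
  rw [hPQ, hPmulQ, sub_zero]

theorem cov_pathProd_eq_zero_of_not_bad (μ : Measure Ω) [IsProbabilityMeasure μ]
    (d n : ℕ) (hd : 0 < d) (hn : 1 ≤ n)
    (Θ : Fin n → Ω → Matrix (Fin d) (Fin d) ℝ) (X : Fin d → Ω → ℝ)
    (hΘmeas : ∀ i a b, Measurable fun ω => Θ i ω a b)
    (hXmeas : ∀ j, Measurable (X j))
    (hentries : iIndepFun
      (fun p : Fin n × Fin d × Fin d => fun ω => Θ p.1 ω p.2.1 p.2.2) μ)
    (hgauss : ∀ i a b, Measure.map (fun ω => Θ i ω a b) μ = gaussianReal 0 (d : ℝ≥0)⁻¹)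
    (hindepX : IndepFun (fun ω => fun p : Fin n × Fin d × Fin d => Θ p.1 ω p.2.1 p.2.2)
      (fun ω (j : Fin d) => X j ω) μ)
    (hX4 : ∀ j, Integrable (fun ω => (X j ω) ^ 4) μ)
    (j : Fin 4 → Fin (n + 1) → Fin d)
    (hnotbad : ¬ IsBad d n j) :
    (∫ ω, pathProd d n Θ X (j 0) (j 1) ω * pathProd d n Θ X (j 2) (j 3) ω ∂μ)
        - (∫ ω, pathProd d n Θ X (j 0) (j 1) ω ∂μ)
          * (∫ ω, pathProd d n Θ X (j 2) (j 3) ω ∂μ) = 0 :=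
  cov_pathProd_eq_zero_of_not_bad_general μ d n Θ X hΘmeas hXmeas hentries hgauss hindepX j hnotbad

end
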